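/- arXiv:2601.17305 — 7 statements merged into one kernel-verified Lean document; each statement's English description precedes it below -/
import Mathlib

section
/- Let A ∈ ℝ^{m×n} be a real matrix, u₀ ∈ ℝⁿ, d ∈ ℝ^m, and let C ∈ ℝ^{n×n} and Σ ∈ ℝ^{m×m} be symmetric positive definite. Then u^MAP := u₀ + CAᵀ(Σ + ACAᵀ)⁻¹(d − Au₀) is the unique global minimizer over ℝⁿ of the Tikhonov functional J(u) = ½(d − Au)ᵀΣ⁻¹(d − Au) + ½(u − u₀)ᵀC⁻¹(u − u₀). -/
/-!
`J` is a quadratic with Hessian `AᵀΣ⁻¹A + C⁻¹`, which is positive definite, so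
`J (x + h) = J x + ⟪∇J x, h⟫ + ½ ((Ah)ᵀΣ⁻¹(Ah) + hᵀC⁻¹h)` and a critical point is the unique
strict minimizer. For `w = (Σ + ACAᵀ)⁻¹(d − Au₀)` one has `u^MAP − u₀ = CAᵀw` and
`Au^MAP − d = −Σw`, hence `∇J u^MAP = −AᵀΣ⁻¹Σw + C⁻¹CAᵀw = 0`.
-/

open Matrix

lemma Matrix.IsSymm.add_dotProduct_mulVec_add {ι R : Type*} [Fintype ι] [CommRing R]
    {M : Matrix ι ι R} (hM : M.IsSymm) (x y : ι → R) :
    (x + y) ⬝ᵥ M *ᵥ (x + y) = x ⬝ᵥ M *ᵥ x + 2 * (y ⬝ᵥ M *ᵥ x) + y ⬝ᵥ M *ᵥ y := by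
  have hswap : x ⬝ᵥ M *ᵥ y = y ⬝ᵥ M *ᵥ x := by
    rw [← dotProduct_transpose_mulVec, hM.eq]
  rw [mulVec_add, dotProduct_add, add_dotProduct, add_dotProduct, hswap]
  ring

section Tikhonov

variable {ι κ : Type*} [Fintype ι] [Fintype κ]

/-- `P` and `Q` stand for the precision matrices `Σ⁻¹` and `C⁻¹`. -/
noncomputable def tikhonov (A : Matrix κ ι ℝ) (d : κ → ℝ) (P : Matrix κ κ ℝ) (u₀ : ι → ℝ)
    (Q : Matrix ι ι ℝ) (u : ι → ℝ) : ℝ :=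
  1 / 2 * ((d - A *ᵥ u) ⬝ᵥ (P *ᵥ (d - A *ᵥ u))) + 1 / 2 * ((u - u₀) ⬝ᵥ (Q *ᵥ (u - u₀)))

def tikhonovGrad {R : Type*} [CommRing R] (A : Matrix κ ι R) (d : κ → R) (P : Matrix κ κ R)
    (u₀ : ι → R) (Q : Matrix ι ι R) (u : ι → R) : ι → R :=
  Aᵀ *ᵥ (P *ᵥ (A *ᵥ u - d)) + Q *ᵥ (u - u₀)

noncomputable def mapEstimate {R : Type*} [CommRing R] [DecidableEq κ] (A : Matrix κ ι R) (d : κ → R)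
    (u₀ : ι → R) (C : Matrix ι ι R) (S : Matrix κ κ R) : ι → R :=
  u₀ + (C * Aᵀ * (S + A * C * Aᵀ)⁻¹) *ᵥ (d - A *ᵥ u₀)

variable (A : Matrix κ ι ℝ) (d : κ → ℝ) {P : Matrix κ κ ℝ} (u₀ : ι → ℝ) {Q : Matrix ι ι ℝ}

lemma tikhonov_add (hP : P.IsSymm) (hQ : Q.IsSymm) (u h : ι → ℝ) :
    tikhonov A d P u₀ Q (u + h) = tikhonov A d P u₀ Q u + h ⬝ᵥ tikhonovGrad A d P u₀ Q u
      + 1 / 2 * ((A *ᵥ h) ⬝ᵥ P *ᵥ (A *ᵥ h) + h ⬝ᵥ Q *ᵥ h) := by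
  have hres : d - A *ᵥ (u + h) = (d - A *ᵥ u) + -(A *ᵥ h) := by rw [mulVec_add]; abel
  have hdev : u + h - u₀ = (u - u₀) + h := by abel
  have hpull : h ⬝ᵥ Aᵀ *ᵥ (P *ᵥ (A *ᵥ u - d)) = -((A *ᵥ h) ⬝ᵥ P *ᵥ (d - A *ᵥ u)) := by
    rw [dotProduct_transpose_mulVec, dotProduct_comm, ← neg_sub, mulVec_neg, dotProduct_neg]
  unfold tikhonov tikhonovGrad
  rw [hres, hdev, hP.add_dotProduct_mulVec_add, hQ.add_dotProduct_mulVec_add, dotProduct_add,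
    hpull]
  simp only [mulVec_neg, dotProduct_neg, neg_dotProduct, neg_neg]
  ring

lemma tikhonov_lt_of_tikhonovGrad_eq_zero (hP : P.PosSemidef) (hQ : Q.PosDef) {x : ι → ℝ}
    (hx : tikhonovGrad A d P u₀ Q x = 0) {u : ι → ℝ} (hu : u ≠ x) :
    tikhonov A d P u₀ Q x < tikhonov A d P u₀ Q u := by
  have hdata : 0 ≤ (A *ᵥ (u - x)) ⬝ᵥ P *ᵥ (A *ᵥ (u - x)) := by
    simpa using hP.dotProduct_mulVec_nonneg (A *ᵥ (u - x))
  have hprior : 0 < (u - x) ⬝ᵥ Q *ᵥ (u - x) := by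
    simpa using hQ.dotProduct_mulVec_pos (sub_ne_zero.mpr hu)
  have hexpand := tikhonov_add A d u₀ (isHermitian_iff_isSymm.mp hP.isHermitian)
    (isHermitian_iff_isSymm.mp hQ.isHermitian) x (u - x)
  rw [add_sub_cancel, hx, dotProduct_zero] at hexpand
  linarith

end Tikhonov

theorem tikhonovGrad_mapEstimate {ι κ R : Type*} [Fintype ι] [Fintype κ] [DecidableEq ι]
    [DecidableEq κ] [CommRing R] (A : Matrix κ ι R) (d : κ → R) (u₀ : ι → R)
    {C : Matrix ι ι R} {S : Matrix κ κ R} (hC : IsUnit C.det) (hS : IsUnit S.det)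
    (hG : IsUnit (S + A * C * Aᵀ).det) :
    tikhonovGrad A d S⁻¹ u₀ C⁻¹ (mapEstimate A d u₀ C S) = 0 := by
  set x := mapEstimate A d u₀ C S
  set w := (S + A * C * Aᵀ)⁻¹ *ᵥ (d - A *ᵥ u₀)
  have hw : (S + A * C * Aᵀ) *ᵥ w = d - A *ᵥ u₀ := by
    rw [mulVec_mulVec, mul_nonsing_inv _ hG, one_mulVec]
  have hdev : x - u₀ = C *ᵥ (Aᵀ *ᵥ w) := by
    simp only [x, w, mapEstimate, add_sub_cancel_left, mulVec_mulVec, Matrix.mul_assoc]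
  have hres : A *ᵥ x - d = -(S *ᵥ w) := by
    have hsplit : A *ᵥ x - d = (A * C * Aᵀ) *ᵥ w - (d - A *ᵥ u₀) := by
      simp only [x, w, mapEstimate, mulVec_add, mulVec_mulVec, Matrix.mul_assoc]
      abel
    rw [hsplit, ← hw, add_mulVec]
    abel
  rw [tikhonovGrad, hres, hdev, mulVec_neg, mulVec_mulVec, nonsing_inv_mul _ hS, one_mulVec,
    mulVec_mulVec, nonsing_inv_mul _ hC, one_mulVec, mulVec_neg, neg_add_cancel]

/-- `u^MAP = u₀ + CAᵀ(Σ + ACAᵀ)⁻¹(d − Au₀)` is the unique global minimizer of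
the Tikhonov functional `J(u) = ½(d − Au)ᵀΣ⁻¹(d − Au) + ½(u − u₀)ᵀC⁻¹(u − u₀)`. -/
theorem map_unique_global_minimizer {m n : ℕ}
    (A : Matrix (Fin m) (Fin n) ℝ) (u₀ : Fin n → ℝ) (d : Fin m → ℝ)
    (C : Matrix (Fin n) (Fin n) ℝ) (Sig : Matrix (Fin m) (Fin m) ℝ)
    (hC : C.PosDef) (hSig : Sig.PosDef) :
    let J : (Fin n → ℝ) → ℝ := fun u =>
      (1 / 2) * ((d - A *ᵥ u) ⬝ᵥ (Sig⁻¹ *ᵥ (d - A *ᵥ u))) +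
        (1 / 2) * ((u - u₀) ⬝ᵥ (C⁻¹ *ᵥ (u - u₀)))
    let uMAP : Fin n → ℝ := u₀ + (C * Aᵀ * (Sig + A * C * Aᵀ)⁻¹) *ᵥ (d - A *ᵥ u₀)
    ∀ u : Fin n → ℝ, u ≠ uMAP → J uMAP < J u := by
  intro J uMAP u hu
  have hG : (Sig + A * C * Aᵀ).PosDef :=
    hSig.add_posSemidef (by simpa using hC.posSemidef.mul_mul_conjTranspose_same A)
  have hgrad := tikhonovGrad_mapEstimate A d u₀ ((isUnit_iff_isUnit_det _).mp hC.isUnit)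
    ((isUnit_iff_isUnit_det _).mp hSig.isUnit) ((isUnit_iff_isUnit_det _).mp hG.isUnit)
  exact tikhonov_lt_of_tikhonovGrad_eq_zero A d u₀ hSig.inv.posSemidef hC.inv hgrad hu
end

section
/- Let A ∈ ℝ^{m×n}, d ∈ ℝ^m, μ > 0 and Σ_h = μI_m. For an ensemble u = (u^(1),…,u^(N)) ∈ (ℝⁿ)^N let ū = (1/N)Σᵢu^(i), C(u) = (1/N)Σᵢ(u^(i) − ū)(u^(i) − ū)ᵀ, and for α ≥ 0 define g_m(u,α) ∈ (ℝⁿ)^N componentwise by g_m(u,α)^(i) = u^(i) + α·C(u)Aᵀ(Σ_h + α·AC(u)Aᵀ)⁻¹(d − Au^(i)). Let (α_k)_{k≥0} be any sequence of nonnegative reals, let u₀ ∈ (ℝⁿ)^N, and define u_{k+1} = g_m(u_k, α_k). Then for every k ≥ 0 and every i ∈ {1,…,N}, the member u_k^(i) lies in the linear span D of the initial ensemble members {u₀^(1),…,u₀^(N)} ⊆ ℝⁿ (the subspace property of the multiplicatively corrected Ensemble Kalman Inversion). -/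
open Matrix

/-- The sample covariance matrix of an ensemble `u = (u^(1),…,u^(N))` of vectors in `ℝⁿ`:
`C(u) = (1/N) ∑ᵢ (u^(i) − ū)(u^(i) − ū)ᵀ`, where `ū = (1/N) ∑ᵢ u^(i)`. -/
noncomputable def sampleCov {n N : ℕ} (u : Fin N → Fin n → ℝ) : Matrix (Fin n) (Fin n) ℝ :=
  (N : ℝ)⁻¹ • ∑ i, vecMulVec (u i - (N : ℝ)⁻¹ • ∑ j, u j) (u i - (N : ℝ)⁻¹ • ∑ j, u j)


lemma vecMulVec_mulVec' {n : ℕ} (x y w : Fin n → ℝ) :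
    vecMulVec x y *ᵥ w = (y ⬝ᵥ w) • x := by
  ext j
  simp only [vecMulVec, mulVec, dotProduct, Matrix.of_apply, Pi.smul_apply, smul_eq_mul,
    Finset.sum_mul]
  exact Finset.sum_congr rfl fun k _ => by ring

lemma sum_mulVec' {n N : ℕ} (M : Fin N → Matrix (Fin n) (Fin n) ℝ) (w : Fin n → ℝ) :
    (∑ i, M i) *ᵥ w = ∑ i, M i *ᵥ w := by
  ext j
  simp [mulVec, dotProduct, Finset.sum_apply, Matrix.sum_apply, Finset.sum_mul]
  rw [Finset.sum_comm]

lemma sampleCov_mulVec_mem {n N : ℕ} (u : Fin N → Fin n → ℝ) (w : Fin n → ℝ)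
    (S : Submodule ℝ (Fin n → ℝ)) (hu : ∀ i, u i ∈ S) :
    sampleCov u *ᵥ w ∈ S := by
  have hbar : (N : ℝ)⁻¹ • ∑ j, u j ∈ S := S.smul_mem _ (S.sum_mem fun j _ => hu j)
  unfold sampleCov
  rw [Matrix.smul_mulVec, sum_mulVec']
  refine S.smul_mem _ (S.sum_mem fun i _ => ?_)
  rw [vecMulVec_mulVec']
  exact S.smul_mem _ (S.sub_mem (hu i) hbar)

/-- One step of the multiplicatively corrected Ensemble Kalman Inversion (EnKI-MC):
`g_m(u,α)^(i) = u^(i) + α·C(u)Aᵀ(μI + α·AC(u)Aᵀ)⁻¹(d − Au^(i))`. -/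
noncomputable def enkiStep {m n N : ℕ} (A : Matrix (Fin m) (Fin n) ℝ) (d : Fin m → ℝ)
    (μ : ℝ) (α : ℝ) (u : Fin N → Fin n → ℝ) : Fin N → Fin n → ℝ :=
  fun i => u i +
    (α • (sampleCov u * Aᵀ *
      (μ • (1 : Matrix (Fin m) (Fin m) ℝ) + α • (A * sampleCov u * Aᵀ))⁻¹)) *ᵥ
        (d - A *ᵥ u i)

/-- **subspace property of EnKI-MC.** For any sequence of nonnegative correction
factors `α_k`, every iterate of `u_{k+1} = g_m(u_k, α_k)` keeps all ensemble members in the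
linear span `D` of the initial ensemble members. -/
theorem enkiMC_subspace_property {m n N : ℕ}
    (A : Matrix (Fin m) (Fin n) ℝ) (d : Fin m → ℝ) (μ : ℝ) (hμ : 0 < μ)
    (α : ℕ → ℝ) (hα : ∀ k, 0 ≤ α k)
    (u : ℕ → Fin N → Fin n → ℝ)
    (hiter : ∀ k, u (k + 1) = enkiStep A d μ (α k) (u k)) :
    ∀ k i, u k i ∈ Submodule.span ℝ (Set.range (u 0)) := by
  intro k
  induction k with
  | zero => exact fun i => Submodule.subset_span ⟨i, rfl⟩
  | succ k ih =>
    intro i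
    rw [hiter k]
    unfold enkiStep
    set S := Submodule.span ℝ (Set.range (u 0))
    refine S.add_mem (ih i) ?_
    rw [Matrix.smul_mulVec, Matrix.mul_assoc, ← Matrix.mulVec_mulVec]
    exact S.smul_mem _ (sampleCov_mulVec_mem _ _ _ ih)
end

section
/- Let μ > 0, let B ∈ ℝ^{m×m} be symmetric positive semidefinite, let r ∈ ℝ^m, and let α ≥ 1. Then the matrices (μ/α)I + B and μI + B are positive definite, and ‖((μ/α)I + B)⁻¹ r − (μI + B)⁻¹ r‖₂ ≤ ((α − 1)/μ)·‖r‖₂. Equivalently, writing λ(α) = (μI + αB)⁻¹r, one has ‖α·λ(α) − λ(1)‖₂ ≤ ((α − 1)/μ)·‖r‖₂. -/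
/-!
Write `P = (μ/α)I + B` and `Q = μI + B`. The resolvent identity
`P⁻¹ - Q⁻¹ = (μ - μ/α) P⁻¹ Q⁻¹` reduces the estimate to `‖(cI + B)⁻¹‖ ≤ 1/c` for `c > 0`,
which holds because `cI + B` is coercive: `c‖y‖² ≤ ⟪y, (cI + B)y⟫ ≤ ‖y‖ ‖(cI + B)y‖`.
The second estimate is the first one in disguise, since `μI + αB = αP`.
-/

open Matrix

/-- The Euclidean norm of a vector in `ℝᵏ`. -/
noncomputable def eNorm {k : ℕ} (x : Fin k → ℝ) : ℝ := Real.sqrt (∑ i, x i ^ 2)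

lemma eNorm_eq_norm_toLp {k : ℕ} (x : Fin k → ℝ) : eNorm x = ‖WithLp.toLp 2 x‖ := by
  simp [eNorm, EuclideanSpace.norm_eq]

lemma mul_norm_le_norm_of_mul_norm_sq_le_inner {E : Type*} [NormedAddCommGroup E]
    [InnerProductSpace ℝ E] {c : ℝ} (hc : 0 < c) {y z : E} (h : c * ‖y‖ ^ 2 ≤ inner ℝ y z) :
    c * ‖y‖ ≤ ‖z‖ := by
  nlinarith [real_inner_le_norm y z, norm_nonneg y, norm_nonneg z]

namespace Matrix

variable {n : Type*}

lemma PosSemidef.posDef_smul_one_add [DecidableEq n] {B : Matrix n n ℝ} (hB : B.PosSemidef)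
    {c : ℝ} (hc : 0 < c) : (c • (1 : Matrix n n ℝ) + B).PosDef :=
  (PosDef.one.smul hc).add_posSemidef hB

lemma inv_smul_one_add_sub_inv_smul_one_add [Fintype n] [DecidableEq n] {K : Type*}
    [CommRing K] {B : Matrix n n K} {ν μ : K} (hν : IsUnit (ν • (1 : Matrix n n K) + B))
    (hμ : IsUnit (μ • (1 : Matrix n n K) + B)) :
    (ν • (1 : Matrix n n K) + B)⁻¹ - (μ • (1 : Matrix n n K) + B)⁻¹ =
      (μ - ν) • ((ν • (1 : Matrix n n K) + B)⁻¹ * (μ • (1 : Matrix n n K) + B)⁻¹) := by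
  rw [inv_sub_inv (iff_of_true hν hμ), add_sub_add_right_eq_sub, ← sub_smul, Matrix.mul_smul,
    mul_one, Matrix.smul_mul]

lemma smul_inv_smul_one_add_smul_mulVec [Fintype n] [DecidableEq n] {K : Type*} [Field K]
    {α μ : K} (hα : α ≠ 0) {B : Matrix n n K}
    (hunit : IsUnit ((μ / α) • (1 : Matrix n n K) + B)) (r : n → K) :
    α • ((μ • (1 : Matrix n n K) + α • B)⁻¹ *ᵥ r) = ((μ / α) • (1 : Matrix n n K) + B)⁻¹ *ᵥ r := by
  let _ := invertibleOfNonzero hα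
  have hscale : μ • (1 : Matrix n n K) + α • B = α • ((μ / α) • 1 + B) := by
    rw [smul_add, smul_smul, mul_div_cancel₀ μ hα]
  rw [hscale, Matrix.inv_smul _ α ((isUnit_iff_isUnit_det _).mp hunit), invOf_eq_inv,
    smul_mulVec, smul_smul, mul_inv_cancel₀ hα, one_smul]

variable [Fintype n] [DecidableEq n] {B : Matrix n n ℝ}

lemma PosSemidef.mul_norm_sq_le_inner_smul_one_add_mulVec (hB : B.PosSemidef) (c : ℝ)
    (y : n → ℝ) :
    c * ‖WithLp.toLp 2 y‖ ^ 2 ≤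
      inner ℝ (WithLp.toLp 2 y) (WithLp.toLp 2 ((c • (1 : Matrix n n ℝ) + B) *ᵥ y)) := by
  have hBy : 0 ≤ y ⬝ᵥ (B *ᵥ y) := hB.dotProduct_mulVec_nonneg y
  rw [← real_inner_self_eq_norm_sq, EuclideanSpace.inner_toLp_toLp,
    EuclideanSpace.inner_toLp_toLp, add_mulVec, smul_mulVec, one_mulVec, add_dotProduct,
    smul_dotProduct, star_trivial, dotProduct_comm (B *ᵥ y), smul_eq_mul]
  linarith

lemma PosSemidef.norm_inv_smul_one_add_mulVec_le (hB : B.PosSemidef) {c : ℝ} (hc : 0 < c)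
    (x : n → ℝ) :
    ‖WithLp.toLp 2 ((c • (1 : Matrix n n ℝ) + B)⁻¹ *ᵥ x)‖ ≤ c⁻¹ * ‖WithLp.toLp 2 x‖ := by
  set M := c • (1 : Matrix n n ℝ) + B
  have hMy : M *ᵥ (M⁻¹ *ᵥ x) = x := by
    rw [mulVec_mulVec, mul_nonsing_inv _ (hB.posDef_smul_one_add hc).det_pos.ne'.isUnit,
      one_mulVec]
  rw [le_inv_mul_iff₀ hc]
  have hcoer := hB.mul_norm_sq_le_inner_smul_one_add_mulVec c (M⁻¹ *ᵥ x)
  rw [hMy] at hcoer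
  exact mul_norm_le_norm_of_mul_norm_sq_le_inner hc hcoer

lemma PosSemidef.norm_inv_smul_one_add_mulVec_sub_le (hB : B.PosSemidef) {ν μ : ℝ}
    (hν : 0 < ν) (hνμ : ν ≤ μ) (r : n → ℝ) :
    ‖WithLp.toLp 2 ((ν • (1 : Matrix n n ℝ) + B)⁻¹ *ᵥ r - (μ • (1 : Matrix n n ℝ) + B)⁻¹ *ᵥ r)‖
      ≤ (ν⁻¹ - μ⁻¹) * ‖WithLp.toLp 2 r‖ := by
  have hμ : 0 < μ := hν.trans_le hνμ
  rw [← sub_mulVec, inv_smul_one_add_sub_inv_smul_one_add (hB.posDef_smul_one_add hν).isUnit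
    (hB.posDef_smul_one_add hμ).isUnit, smul_mulVec, ← mulVec_mulVec, WithLp.toLp_smul,
    norm_smul, Real.norm_of_nonneg (sub_nonneg.mpr hνμ)]
  calc (μ - ν) * ‖WithLp.toLp 2 ((ν • 1 + B)⁻¹ *ᵥ ((μ • 1 + B)⁻¹ *ᵥ r))‖
      ≤ (μ - ν) * (ν⁻¹ * (μ⁻¹ * ‖WithLp.toLp 2 r‖)) := by
        gcongr
        refine (hB.norm_inv_smul_one_add_mulVec_le hν _).trans ?_
        gcongr
        exact hB.norm_inv_smul_one_add_mulVec_le hμ r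
    _ = (ν⁻¹ - μ⁻¹) * ‖WithLp.toLp 2 r‖ := by field_simp

end Matrix

/-- **perturbation estimate used in the proof of Theorem 2.** For `μ > 0`,
`B ⪰ 0` symmetric, `r ∈ ℝ^m` and `α ≥ 1`, the matrices `(μ/α)I + B` and `μI + B` are positive
definite and `‖((μ/α)I + B)⁻¹r − (μI + B)⁻¹r‖₂ ≤ ((α − 1)/μ)‖r‖₂`; equivalently, with
`λ(α) = (μI + αB)⁻¹r`, `‖αλ(α) − λ(1)‖₂ ≤ ((α − 1)/μ)‖r‖₂`. -/
theorem enki_resolvent_perturbation {m : ℕ} (μ : ℝ) (hμ : 0 < μ)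
    (B : Matrix (Fin m) (Fin m) ℝ) (hB : B.PosSemidef) (r : Fin m → ℝ)
    (α : ℝ) (hα : 1 ≤ α) :
    ((μ / α) • (1 : Matrix (Fin m) (Fin m) ℝ) + B).PosDef ∧
    (μ • (1 : Matrix (Fin m) (Fin m) ℝ) + B).PosDef ∧
    eNorm (((μ / α) • (1 : Matrix (Fin m) (Fin m) ℝ) + B)⁻¹ *ᵥ r -
        (μ • (1 : Matrix (Fin m) (Fin m) ℝ) + B)⁻¹ *ᵥ r) ≤ ((α - 1) / μ) * eNorm r ∧
    eNorm (α • ((μ • (1 : Matrix (Fin m) (Fin m) ℝ) + α • B)⁻¹ *ᵥ r) -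
        (μ • (1 : Matrix (Fin m) (Fin m) ℝ) + B)⁻¹ *ᵥ r) ≤ ((α - 1) / μ) * eNorm r := by
  have hα₀ : 0 < α := one_pos.trans_le hα
  have hPpd := hB.posDef_smul_one_add (div_pos hμ hα₀)
  have hcoef : (μ / α)⁻¹ - μ⁻¹ = (α - 1) / μ := by field_simp
  have hbound := hB.norm_inv_smul_one_add_mulVec_sub_le (div_pos hμ hα₀) (div_le_self hμ.le hα) r
  rw [hcoef, ← eNorm_eq_norm_toLp, ← eNorm_eq_norm_toLp] at hbound
  refine ⟨hPpd, hB.posDef_smul_one_add hμ, hbound, ?_⟩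
  rwa [smul_inv_smul_one_add_smul_mulVec hα₀.ne' hPpd.isUnit]
end

section
/- Let μ > 0, let A ∈ ℝ^{m×n}, let C ∈ ℝ^{n×n} be symmetric positive semidefinite, set B = ACAᵀ and M(α) = μI_m + αB, let r̄ ∈ ℝ^m and δ > 0. Define S : (0,∞) → ℝ by S(α) = ¼·(r̄ᵀM(α)⁻¹r̄)² + δ·(α − 1)². If α* > 0 is a point where S'(α*) = 0 (in particular, if α* is a local minimizer of S in the open interval (0,∞)), then α* satisfies the fixed-point equation α* = 1 + (r̄ᵀM(α*)⁻¹r̄)·(r̄ᵀM(α*)⁻¹ B M(α*)⁻¹ r̄)/(4δ). -/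
/-!
The resolvent identity `M(α)⁻¹ - M(α*)⁻¹ = (α* - α) • M(α)⁻¹ B M(α*)⁻¹` shows that
`q(α) = r̄ᵀM(α)⁻¹r̄` has derivative `-r̄ᵀM(α)⁻¹BM(α)⁻¹r̄` wherever `M(α)` is invertible, which is
the case at `α* > 0` because `B = ACAᵀ` is positive semidefinite. Then
`S'(α*) = -½ q(α*) r̄ᵀM(α*)⁻¹BM(α*)⁻¹r̄ + 2δ(α* - 1)`, and `S'(α*) = 0` is the fixed-point equation.
-/

open Matrix Filter Topology

theorem HasDerivAt.of_eventually_sub_eq_smul {𝕜 F : Type*} [NontriviallyNormedField 𝕜]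
    [NormedAddCommGroup F] [NormedSpace 𝕜 F] {f g : 𝕜 → F} {x : 𝕜}
    (hfg : ∀ᶠ y in 𝓝 x, f y - f x = (y - x) • g y) (hg : ContinuousAt g x) :
    HasDerivAt f (g x) x := by
  rw [hasDerivAt_iff_tendsto_slope]
  refine hg.tendsto.mono_left nhdsWithin_le_nhds |>.congr' ?_
  filter_upwards [nhdsWithin_le_nhds hfg, self_mem_nhdsWithin] with y hy hne
  rw [slope_def_module, hy, smul_smul, inv_mul_cancel₀ (sub_ne_zero.mpr hne), one_smul]

namespace Matrix

variable {ι 𝕜 : Type*} [DecidableEq ι]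

theorem PosSemidef.posDef_smul_one_add_smul {μ α : ℝ} (hμ : 0 < μ) (hα : 0 ≤ α)
    {B : Matrix ι ι ℝ} (hB : B.PosSemidef) : (μ • 1 + α • B).PosDef :=
  (PosDef.one.smul hμ).add_posSemidef (hB.smul hα)

variable [Fintype ι]

theorem inv_add_smul_sub_inv_add_smul [CommRing 𝕜] {P B : Matrix ι ι 𝕜} {a b : 𝕜}
    (ha : IsUnit (P + a • B).det) (hb : IsUnit (P + b • B).det) :
    (P + a • B)⁻¹ - (P + b • B)⁻¹ = (b - a) • ((P + a • B)⁻¹ * B * (P + b • B)⁻¹) := by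
  rw [inv_sub_inv (by simp [isUnit_iff_isUnit_det, ha, hb]), add_sub_add_left_eq_sub, ← sub_smul,
    Matrix.mul_smul, Matrix.smul_mul]

theorem hasDerivAt_dotProduct_inv_add_smul_mulVec (P B : Matrix ι ι ℝ) (u v : ι → ℝ) {x : ℝ}
    (hx : IsUnit (P + x • B).det) :
    HasDerivAt (fun α => u ⬝ᵥ ((P + α • B)⁻¹ *ᵥ v))
      (-(u ⬝ᵥ ((P + x • B)⁻¹ *ᵥ (B *ᵥ ((P + x • B)⁻¹ *ᵥ v))))) x := by
  have hcont : Continuous fun α : ℝ => P + α • B := by fun_prop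
  have hunit : ∀ᶠ α in 𝓝 x, IsUnit (P + α • B).det := by
    filter_upwards [(hcont.matrix_det.continuousAt (x := x)).eventually_ne hx.ne_zero]
      with α hα using hα.isUnit
  have hinv : ContinuousAt (fun α : ℝ => (P + α • B)⁻¹) x := by
    refine (continuousAt_matrix_inv _ ?_).comp hcont.continuousAt
    rw [Ring.inverse_eq_inv']
    exact continuousAt_inv₀ hx.ne_zero
  set g : ℝ → ℝ := fun α => -(u ⬝ᵥ (((P + α • B)⁻¹ * B * (P + x • B)⁻¹) *ᵥ v))
  have hg : ContinuousAt g x := by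
    have : Continuous fun X : Matrix ι ι ℝ => -(u ⬝ᵥ ((X * B * (P + x • B)⁻¹) *ᵥ v)) := by
      fun_prop
    exact this.continuousAt.comp hinv
  refine (HasDerivAt.of_eventually_sub_eq_smul ?_ hg).congr_deriv ?_
  · filter_upwards [hunit] with α hα
    rw [← dotProduct_sub, ← sub_mulVec, inv_add_smul_sub_inv_add_smul hα hx, smul_mulVec,
      dotProduct_smul, smul_eq_mul, smul_eq_mul, mul_neg, ← neg_mul, neg_sub]
  · simp only [g, mulVec_mulVec, Matrix.mul_assoc]

end Matrix

/-- **Theorem 3: optimal covariance correction factor.** With `B = ACAᵀ`,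
`M(α) = μI + αB`, `S(α) = ¼(r̄ᵀM(α)⁻¹r̄)² + δ(α − 1)²`, any stationary point `α* > 0` of `S`
satisfies the fixed-point equation
`α* = 1 + (r̄ᵀM(α*)⁻¹r̄)(r̄ᵀM(α*)⁻¹BM(α*)⁻¹r̄)/(4δ)`. -/
theorem enkiMC_optimal_alpha_fixed_point {m n : ℕ} (μ : ℝ) (hμ : 0 < μ)
    (A : Matrix (Fin m) (Fin n) ℝ) (C : Matrix (Fin n) (Fin n) ℝ) (hC : C.PosSemidef)
    (rbar : Fin m → ℝ) (δ : ℝ) (hδ : 0 < δ) :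
    let B : Matrix (Fin m) (Fin m) ℝ := A * C * Aᵀ
    let M : ℝ → Matrix (Fin m) (Fin m) ℝ := fun α => μ • 1 + α • B
    let S : ℝ → ℝ := fun α =>
      (1 / 4) * (rbar ⬝ᵥ ((M α)⁻¹ *ᵥ rbar)) ^ 2 + δ * (α - 1) ^ 2
    ∀ αstar : ℝ, 0 < αstar → HasDerivAt S 0 αstar →
      αstar = 1 + (rbar ⬝ᵥ ((M αstar)⁻¹ *ᵥ rbar)) *
        (rbar ⬝ᵥ ((M αstar)⁻¹ *ᵥ (B *ᵥ ((M αstar)⁻¹ *ᵥ rbar)))) / (4 * δ) := by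
  intro B M S αstar hαstar hS
  have hB : B.PosSemidef := by simpa using hC.mul_mul_conjTranspose_same A
  have hM : IsUnit (M αstar).det :=
    (hB.posDef_smul_one_add_smul hμ hαstar.le).det_pos.ne'.isUnit
  set q := rbar ⬝ᵥ ((M αstar)⁻¹ *ᵥ rbar)
  set q' := rbar ⬝ᵥ ((M αstar)⁻¹ *ᵥ (B *ᵥ ((M αstar)⁻¹ *ᵥ rbar)))
  have hq : HasDerivAt (fun α => rbar ⬝ᵥ ((M α)⁻¹ *ᵥ rbar)) (-q') αstar :=
    hasDerivAt_dotProduct_inv_add_smul_mulVec _ _ rbar rbar hM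
  have hS' : HasDerivAt S (1 / 4 * (2 * q * -q') + δ * (2 * (αstar - 1))) αstar :=
    ((hq.fun_pow 2).const_mul (1 / 4 : ℝ) |>.add
      ((((hasDerivAt_id' αstar).sub_const 1).fun_pow 2).const_mul δ)).congr_deriv (by simp [q])
  have hstationary := hS'.unique hS
  field_simp
  linarith
end

section
/- Let μ > 0, A ∈ ℝ^{m×n}, C ∈ ℝ^{n×n} symmetric positive semidefinite, B = ACAᵀ, M(α) = μI_m + αB, r̄ ∈ ℝ^m, and δ > 0. Define ζ_δ(α) = 1 + (r̄ᵀM(α)⁻¹r̄)·(r̄ᵀM(α)⁻¹ B M(α)⁻¹ r̄)/(4δ) for α ∈ [1,∞). Then ζ_δ is differentiable and for every α ∈ [1,∞), |ζ_δ'(α)| ≤ (3/(4δ))·λ_max(B)²·‖r̄‖₂⁴/(μ + λ_min(B))⁴, where λ_max(B) and λ_min(B) denote the largest and smallest eigenvalues of B. -/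
open Matrix

/-!
Diagonalise `B = U diag(d) Uᵀ` and put `wᵢ = (Uᵀ r̄)ᵢ²`, so that `∑ wᵢ = ‖r̄‖²`. Every quadratic
form in `ζ` is then a moment `R_k(α) = ∑ wᵢ dᵢᵏ / (μ + α dᵢ)^(k+1)`, namely `ζ = 1 + R₀ R₁ / (4δ)`.
Since `R_k' = -(k+1) R_{k+1}`, we get `ζ' = -(R₁² + 2 R₀ R₂) / (4δ)`. For `α ≥ 1` we have
`μ + λ_min ≤ μ + α dᵢ` and `0 ≤ dᵢ ≤ λ_max`, hence `R_k ≤ λ_maxᵏ ‖r̄‖² / (μ + λ_min)^(k+1)`, so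
`R₁² + 2 R₀ R₂ ≤ 3 λ_max² ‖r̄‖⁴ / (μ + λ_min)⁴`.
-/

open Unitary

section ResolventMoment

variable {ι : Type*} [Fintype ι] {μ β Λ L : ℝ} {d w : ι → ℝ}

noncomputable def resolventMoment (μ : ℝ) (d w : ι → ℝ) (k : ℕ) (β : ℝ) : ℝ :=
  ∑ i, w i * d i ^ k / (μ + β * d i) ^ (k + 1)

theorem hasDerivAt_resolventMoment (k : ℕ) (h : ∀ i, μ + β * d i ≠ 0) :
    HasDerivAt (resolventMoment μ d w k) (-(k + 1) * resolventMoment μ d w (k + 1) β) β := by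
  rw [resolventMoment, Finset.mul_sum]
  refine HasDerivAt.fun_sum fun i _ => ?_
  have hbase : HasDerivAt (fun β => μ + β * d i) (d i) β := by
    simpa using (hasDerivAt_mul_const (d i)).const_add μ
  refine ((hasDerivAt_const β (w i * d i ^ k)).fun_div (hbase.fun_pow (k + 1))
    (pow_ne_zero _ (h i))).congr_deriv ?_
  field_simp [h i]
  push_cast
  ring

theorem hasDerivAt_resolventMoment_zero_mul_one (h : ∀ i, μ + β * d i ≠ 0) :
    HasDerivAt (fun β => resolventMoment μ d w 0 β * resolventMoment μ d w 1 β)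
      (-(resolventMoment μ d w 1 β ^ 2 +
        2 * resolventMoment μ d w 0 β * resolventMoment μ d w 2 β)) β := by
  refine ((hasDerivAt_resolventMoment 0 h).mul (hasDerivAt_resolventMoment 1 h)).congr_deriv ?_
  norm_num
  ring

theorem resolventMoment_nonneg (k : ℕ) (hw : ∀ i, 0 ≤ w i) (hd : ∀ i, 0 ≤ d i)
    (ha : ∀ i, 0 ≤ μ + β * d i) : 0 ≤ resolventMoment μ d w k β :=
  Finset.sum_nonneg fun i _ => div_nonneg (mul_nonneg (hw i) (pow_nonneg (hd i) k))
    (pow_nonneg (ha i) _)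

theorem resolventMoment_le (k : ℕ) (hw : ∀ i, 0 ≤ w i) (hd : ∀ i, 0 ≤ d i)
    (hdΛ : ∀ i, d i ≤ Λ) (hL : 0 < L) (hLa : ∀ i, L ≤ μ + β * d i) :
    resolventMoment μ d w k β ≤ Λ ^ k / L ^ (k + 1) * ∑ i, w i := by
  rw [resolventMoment, Finset.mul_sum]
  gcongr with i
  calc w i * d i ^ k / (μ + β * d i) ^ (k + 1) = w i * (d i ^ k / (μ + β * d i) ^ (k + 1)) :=
        mul_div_assoc ..
    _ ≤ w i * (Λ ^ k / L ^ (k + 1)) :=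
        mul_le_mul_of_nonneg_left (div_le_div₀ (pow_nonneg ((hd i).trans (hdΛ i)) k)
          (pow_le_pow_left₀ (hd i) (hdΛ i) k) (pow_pos hL _)
          (pow_le_pow_left₀ hL.le (hLa i) _)) (hw i)
    _ = Λ ^ k / L ^ (k + 1) * w i := mul_comm ..

theorem abs_resolventMoment_one_sq_add_le (hw : ∀ i, 0 ≤ w i) (hd : ∀ i, 0 ≤ d i)
    (hdΛ : ∀ i, d i ≤ Λ) (hL : 0 < L) (hLa : ∀ i, L ≤ μ + β * d i) :
    |resolventMoment μ d w 1 β ^ 2 + 2 * resolventMoment μ d w 0 β * resolventMoment μ d w 2 β|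
      ≤ 3 * Λ ^ 2 / L ^ 4 * (∑ i, w i) ^ 2 := by
  have ha : ∀ i, 0 ≤ μ + β * d i := fun i => hL.le.trans (hLa i)
  have le₀ := resolventMoment_le 0 hw hd hdΛ hL hLa
  have le₁ := resolventMoment_le 1 hw hd hdΛ hL hLa
  have le₂ := resolventMoment_le 2 hw hd hdΛ hL hLa
  have nonneg₀ := resolventMoment_nonneg 0 hw hd ha
  have nonneg₁ := resolventMoment_nonneg 1 hw hd ha
  have nonneg₂ := resolventMoment_nonneg 2 hw hd ha
  have hS : 0 ≤ ∑ i, w i := Finset.sum_nonneg fun i _ => hw i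
  rw [abs_of_nonneg (by positivity)]
  calc _ ≤ (Λ ^ 1 / L ^ 2 * ∑ i, w i) ^ 2 +
        2 * (Λ ^ 0 / L ^ 1 * ∑ i, w i) * (Λ ^ 2 / L ^ 3 * ∑ i, w i) := by gcongr
    _ = 3 * Λ ^ 2 / L ^ 4 * (∑ i, w i) ^ 2 := by
      field_simp
      ring

end ResolventMoment

namespace Matrix

variable {m : Type*} [Fintype m] [DecidableEq m]

theorem dotProduct_conj_diagonal_mulVec (U : unitary (Matrix m m ℝ)) (c r : m → ℝ) :
    r ⬝ᵥ (conjStarAlgAut ℝ _ U (diagonal c) *ᵥ r) =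
      ∑ i, (star (U : Matrix m m ℝ) *ᵥ r) i ^ 2 * c i := by
  have hvec : r ᵥ* (U : Matrix m m ℝ) = star (U : Matrix m m ℝ) *ᵥ r := by
    rw [star_eq_conjTranspose, conjTranspose_eq_transpose_of_trivial, mulVec_transpose]
  rw [conjStarAlgAut_apply, ← mulVec_mulVec, ← mulVec_mulVec, dotProduct_mulVec, hvec]
  simp only [dotProduct, mulVec_diagonal]
  exact Finset.sum_congr rfl fun i _ => by ring

theorem sum_sq_star_unitary_mulVec (U : unitary (Matrix m m ℝ)) (r : m → ℝ) :
    ∑ i, (star (U : Matrix m m ℝ) *ᵥ r) i ^ 2 = ∑ i, r i ^ 2 := by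
  simpa [dotProduct, sq] using (dotProduct_conj_diagonal_mulVec U 1 r).symm

theorem PosSemidef.sInf_spectrum_nonneg {B : Matrix m m ℝ} (hB : B.PosSemidef) :
    0 ≤ sInf (spectrum ℝ B) := by
  rw [hB.1.spectrum_real_eq_range_eigenvalues]
  exact Real.sInf_nonneg (Set.forall_mem_range.2 hB.eigenvalues_nonneg)

namespace IsHermitian

variable {B : Matrix m m ℝ} (hB : B.IsHermitian)

noncomputable def spectralWeights (r : m → ℝ) : m → ℝ :=
  fun i => (star (hB.eigenvectorUnitary : Matrix m m ℝ) *ᵥ r) i ^ 2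

theorem spectralWeights_nonneg (r : m → ℝ) (i : m) : 0 ≤ hB.spectralWeights r i :=
  sq_nonneg _

theorem sum_spectralWeights (r : m → ℝ) : ∑ i, hB.spectralWeights r i = ∑ i, r i ^ 2 :=
  sum_sq_star_unitary_mulVec _ r

theorem eigenvalues_le_sSup_spectrum (i : m) : hB.eigenvalues i ≤ sSup (spectrum ℝ B) := by
  rw [hB.spectrum_real_eq_range_eigenvalues]
  exact le_csSup (Set.finite_range _).bddAbove ⟨i, rfl⟩

theorem sInf_spectrum_le_eigenvalues (i : m) : sInf (spectrum ℝ B) ≤ hB.eigenvalues i := by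
  rw [hB.spectrum_real_eq_range_eigenvalues]
  exact csInf_le (Set.finite_range _).bddBelow ⟨i, rfl⟩

theorem eq_conj_diagonal_eigenvalues :
    B = conjStarAlgAut ℝ _ hB.eigenvectorUnitary (diagonal hB.eigenvalues) := by
  simpa using hB.spectral_theorem

theorem smul_one_add_smul_eq_conj (μ β : ℝ) :
    μ • (1 : Matrix m m ℝ) + β • B =
      conjStarAlgAut ℝ _ hB.eigenvectorUnitary (diagonal fun i => μ + β * hB.eigenvalues i) := by
  have : diagonal (fun i => μ + β * hB.eigenvalues i) = μ • 1 + β • diagonal hB.eigenvalues := by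
    ext i j
    by_cases h : i = j <;> simp [h]
  rw [this, map_add, map_smul, map_smul, map_one, ← hB.eq_conj_diagonal_eigenvalues]

theorem inv_smul_one_add_smul_eq_conj {μ β : ℝ} (h : ∀ i, μ + β * hB.eigenvalues i ≠ 0) :
    (μ • (1 : Matrix m m ℝ) + β • B)⁻¹ =
      conjStarAlgAut ℝ _ hB.eigenvectorUnitary
        (diagonal fun i => (μ + β * hB.eigenvalues i)⁻¹) := by
  refine inv_eq_right_inv ?_
  rw [hB.smul_one_add_smul_eq_conj, ← map_mul, diagonal_mul_diagonal]
  simp [h]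

theorem dotProduct_inv_smul_one_add_smul_mulVec {μ β : ℝ}
    (h : ∀ i, μ + β * hB.eigenvalues i ≠ 0) (r : m → ℝ) :
    r ⬝ᵥ ((μ • (1 : Matrix m m ℝ) + β • B)⁻¹ *ᵥ r) =
      resolventMoment μ hB.eigenvalues (hB.spectralWeights r) 0 β := by
  rw [hB.inv_smul_one_add_smul_eq_conj h, dotProduct_conj_diagonal_mulVec, resolventMoment]
  simp [spectralWeights, div_eq_mul_inv]

theorem dotProduct_inv_mulVec_mulVec_inv_mulVec {μ β : ℝ}
    (h : ∀ i, μ + β * hB.eigenvalues i ≠ 0) (r : m → ℝ) :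
    r ⬝ᵥ ((μ • (1 : Matrix m m ℝ) + β • B)⁻¹ *ᵥ (B *ᵥ ((μ • (1 : Matrix m m ℝ) + β • B)⁻¹ *ᵥ r))) =
      resolventMoment μ hB.eigenvalues (hB.spectralWeights r) 1 β := by
  rw [mulVec_mulVec, mulVec_mulVec, hB.inv_smul_one_add_smul_eq_conj h]
  -- only the explicit `B` may be rewritten: `hB` mentions it too
  conv_lhs => enter [2, 1, 1, 2]; rw [hB.eq_conj_diagonal_eigenvalues]
  rw [← map_mul, ← map_mul, diagonal_mul_diagonal, diagonal_mul_diagonal,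
    dotProduct_conj_diagonal_mulVec, resolventMoment]
  refine Finset.sum_congr rfl fun i _ => ?_
  simp only [spectralWeights]
  field_simp

end IsHermitian

end Matrix

open Filter Topology in
/-- **derivative bound for the fixed-point map `ζ_δ`, Proposition 4.** With
`B = ACAᵀ`, `M(α) = μI + αB` and
`ζ_δ(α) = 1 + (r̄ᵀM(α)⁻¹r̄)(r̄ᵀM(α)⁻¹BM(α)⁻¹r̄)/(4δ)`, the map `ζ_δ` is differentiable on
`[1,∞)` and `|ζ_δ'(α)| ≤ (3/(4δ))·λ_max(B)²‖r̄‖₂⁴/(μ + λ_min(B))⁴` there, where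
`λ_max(B) = sSup (spectrum ℝ B)` and `λ_min(B) = sInf (spectrum ℝ B)`. -/
theorem zeta_derivative_bound {m n : ℕ} (μ : ℝ) (hμ : 0 < μ)
    (A : Matrix (Fin m) (Fin n) ℝ) (C : Matrix (Fin n) (Fin n) ℝ) (hC : C.PosSemidef)
    (rbar : Fin m → ℝ) (δ : ℝ) (hδ : 0 < δ) :
    let B : Matrix (Fin m) (Fin m) ℝ := A * C * Aᵀ
    let M : ℝ → Matrix (Fin m) (Fin m) ℝ := fun α => μ • 1 + α • B
    let ζ : ℝ → ℝ := fun α => 1 + (rbar ⬝ᵥ ((M α)⁻¹ *ᵥ rbar)) *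
      (rbar ⬝ᵥ ((M α)⁻¹ *ᵥ (B *ᵥ ((M α)⁻¹ *ᵥ rbar)))) / (4 * δ)
    let lmax : ℝ := sSup (spectrum ℝ B)
    let lmin : ℝ := sInf (spectrum ℝ B)
    ∀ α : ℝ, 1 ≤ α →
      DifferentiableAt ℝ ζ α ∧
      |deriv ζ α| ≤ (3 / (4 * δ)) * lmax ^ 2 * eNorm rbar ^ 4 / (μ + lmin) ^ 4 := by
  intro B M ζ lmax lmin α hα
  have hB : B.PosSemidef := by simpa using hC.mul_mul_conjTranspose_same A
  set d := hB.1.eigenvalues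
  set w := hB.1.spectralWeights rbar
  have hd : ∀ i, 0 ≤ d i := hB.eigenvalues_nonneg
  have hpos : ∀ β, 0 ≤ β → ∀ i, 0 < μ + β * d i := fun β hβ i =>
    add_pos_of_pos_of_nonneg hμ (mul_nonneg hβ (hd i))
  have hζ : ζ =ᶠ[𝓝 α] fun β =>
      1 + resolventMoment μ d w 0 β * resolventMoment μ d w 1 β / (4 * δ) := by
    filter_upwards [lt_mem_nhds (by linarith : (0 : ℝ) < α)] with β hβ
    have hne : ∀ i, μ + β * d i ≠ 0 := fun i => (hpos β hβ.le i).ne'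
    simp only [ζ, M, hB.1.dotProduct_inv_smul_one_add_smul_mulVec hne,
      hB.1.dotProduct_inv_mulVec_mulVec_inv_mulVec hne]
    rfl
  have hderiv := (((hasDerivAt_resolventMoment_zero_mul_one fun i =>
    (hpos α (by linarith) i).ne').div_const (4 * δ)).const_add 1).congr_of_eventuallyEq hζ
  refine ⟨hderiv.differentiableAt, ?_⟩
  have hL : ∀ i, μ + lmin ≤ μ + α * d i := fun i => add_le_add_right
    ((hB.1.sInf_spectrum_le_eigenvalues i).trans (le_mul_of_one_le_left (hd i) hα)) μ
  have hbound := abs_resolventMoment_one_sq_add_le (hB.1.spectralWeights_nonneg rbar) hd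
    hB.1.eigenvalues_le_sSup_spectrum (by linarith [hB.sInf_spectrum_nonneg]) hL
  have hnorm : eNorm rbar ^ 2 = ∑ i, w i := by
    rw [eNorm, Real.sq_sqrt (by positivity), hB.1.sum_spectralWeights]
  rw [hderiv.deriv, neg_div, abs_neg, abs_div, abs_of_pos (by positivity : (0 : ℝ) < 4 * δ)]
  calc _ ≤ 3 * lmax ^ 2 / (μ + lmin) ^ 4 * (∑ i, w i) ^ 2 / (4 * δ) := by gcongr
    _ = _ := by rw [← hnorm]; ring
end

section
/- Let μ > 0, A ∈ ℝ^{m×n}, C ∈ ℝ^{n×n} symmetric positive semidefinite, B = ACAᵀ, M(α) = μI_m + αB, and r̄ ∈ ℝ^m. Let q ∈ (0,1), ε_δ > 0, and k ≥ 1 an integer, and set δ = (3/(4q))·λ_max(B)²·‖r̄‖₂⁴/(μ + λ_min(B))⁴ + ε_δ·k. Define ζ_δ(α) = 1 + (r̄ᵀM(α)⁻¹r̄)·(r̄ᵀM(α)⁻¹ B M(α)⁻¹ r̄)/(4δ). Then ζ_δ maps [1,∞) into [1,∞) and is a contraction on [1,∞) (Lipschitz with constant at most q < 1); consequently ζ_δ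 has a unique fixed point α* ∈ [1,∞), and for every starting point α⁰ ∈ [1,∞) the fixed-point iterates α^{p+1} = ζ_δ(α^p) converge to α*. -/
open Matrix Filter

/-!
Write `u(α) = M(α)⁻¹ r̄`; since `M(α)` is symmetric, the numerator of `ζ_δ` is
`(r̄ᵀu(α)) (u(α)ᵀB u(α))`, a product of two nonnegative numbers. For `α ≥ 1` the matrix `M(α)` is
coercive with constant `c = μ + λ_min(B)`, so `‖u(α)‖ ≤ ‖r̄‖/c`, and the resolvent identity
`u(α) - u(β) = (β - α) M(α)⁻¹ B u(β)` gives `‖u(α) - u(β)‖ ≤ λ_max ‖r̄‖ / c² · |α - β|`.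
The product rule then bounds the Lipschitz constant of the numerator by
`3 λ_max² ‖r̄‖⁴ / c⁴`, which the choice of `δ` makes at most `4δq`. Banach's fixed-point theorem
on the complete set `[1, ∞)` does the rest.
-/

open scoped NNReal Topology

section EuclideanNorm

variable {k : ℕ}

theorem eNorm_nonneg (x : Fin k → ℝ) : 0 ≤ eNorm x := Real.sqrt_nonneg _

theorem eNorm_sq (x : Fin k → ℝ) : eNorm x ^ 2 = x ⬝ᵥ x := by
  rw [eNorm, Real.sq_sqrt (Finset.sum_nonneg fun i _ => sq_nonneg _)]
  simp only [dotProduct, sq]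

theorem eNorm_smul (c : ℝ) (x : Fin k → ℝ) : eNorm (c • x) = |c| * eNorm x := by
  have h : ∑ i, (c • x) i ^ 2 = c ^ 2 * ∑ i, x i ^ 2 := by
    simp only [Finset.mul_sum, Pi.smul_apply, smul_eq_mul, mul_pow]
  rw [eNorm, eNorm, h, Real.sqrt_mul (sq_nonneg c), Real.sqrt_sq_eq_abs]

theorem abs_dotProduct_le_eNorm_mul_eNorm (x y : Fin k → ℝ) :
    |x ⬝ᵥ y| ≤ eNorm x * eNorm y := by
  rw [eNorm, eNorm, ← Real.sqrt_mul (Finset.sum_nonneg fun i _ => sq_nonneg _)]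
  exact Real.abs_le_sqrt (Finset.sum_mul_sq_le_sq_mul_sq _ _ _)

end EuclideanNorm

section Coercive

variable {m : ℕ} {M : Matrix (Fin m) (Fin m) ℝ} {c : ℝ}

theorem mul_eNorm_le_eNorm_mulVec_of_coercive (hM : ∀ x, c * (x ⬝ᵥ x) ≤ x ⬝ᵥ (M *ᵥ x))
    (x : Fin m → ℝ) : c * eNorm x ≤ eNorm (M *ᵥ x) := by
  have h : c * eNorm x ^ 2 ≤ eNorm x * eNorm (M *ᵥ x) := by
    rw [eNorm_sq]
    exact (hM x).trans ((le_abs_self _).trans (abs_dotProduct_le_eNorm_mul_eNorm _ _))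
  rcases (eNorm_nonneg x).eq_or_lt with h0 | h0
  · rw [← h0, mul_zero]; exact eNorm_nonneg _
  · nlinarith

theorem isUnit_det_of_coercive (hc : 0 < c) (hM : ∀ x, c * (x ⬝ᵥ x) ≤ x ⬝ᵥ (M *ᵥ x)) :
    IsUnit M.det := by
  refine isUnit_iff_ne_zero.mpr fun hdet => ?_
  obtain ⟨x, hx, hMx⟩ := exists_mulVec_eq_zero_iff.mpr hdet
  have hxx : x ⬝ᵥ x ≤ 0 := by
    have := hM x
    rw [hMx, dotProduct_zero] at this
    exact nonpos_of_mul_nonpos_right this hc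
  exact hx (dotProduct_self_eq_zero.mp (le_antisymm hxx (by rw [← eNorm_sq]; positivity)))

theorem eNorm_inv_mulVec_le_of_coercive (hc : 0 < c)
    (hM : ∀ x, c * (x ⬝ᵥ x) ≤ x ⬝ᵥ (M *ᵥ x)) (y : Fin m → ℝ) :
    eNorm (M⁻¹ *ᵥ y) ≤ eNorm y / c := by
  rw [le_div_iff₀' hc]
  simpa only [mulVec_mulVec, mul_nonsing_inv _ (isUnit_det_of_coercive hc hM), one_mulVec]
    using mul_eNorm_le_eNorm_mulVec_of_coercive hM (M⁻¹ *ᵥ y)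

end Coercive

section Spectrum

variable {m : ℕ} {B : Matrix (Fin m) (Fin m) ℝ}

theorem Matrix.IsHermitian.dotProduct_mulVec_eq_sum_eigenvalues (hB : B.IsHermitian)
    (x : Fin m → ℝ) :
    x ⬝ᵥ (B *ᵥ x) =
      ∑ i, hB.eigenvalues i * ((hB.eigenvectorUnitary : Matrix (Fin m) (Fin m) ℝ)ᵀ *ᵥ x) i ^ 2 := by
  set U : Matrix (Fin m) (Fin m) ℝ := ↑hB.eigenvectorUnitary
  have hB' : B = U * diagonal hB.eigenvalues * Uᵀ := by
    simpa [Function.comp_def, star_eq_conjTranspose] using hB.spectral_theorem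
  conv_lhs => rw [hB']
  rw [← mulVec_mulVec, ← mulVec_mulVec, dotProduct_mulVec, ← mulVec_transpose]
  simp only [mulVec_diagonal, dotProduct, sq]
  exact Finset.sum_congr rfl fun i _ => by ring

theorem Matrix.IsHermitian.dotProduct_self_eq_sum (hB : B.IsHermitian) (x : Fin m → ℝ) :
    x ⬝ᵥ x = ∑ i, ((hB.eigenvectorUnitary : Matrix (Fin m) (Fin m) ℝ)ᵀ *ᵥ x) i ^ 2 := by
  set U : Matrix (Fin m) (Fin m) ℝ := ↑hB.eigenvectorUnitary
  have hU : U * Uᵀ = 1 := by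
    simpa [star_eq_conjTranspose] using mem_unitaryGroup_iff.mp hB.eigenvectorUnitary.2
  have h : (Uᵀ *ᵥ x) ⬝ᵥ (Uᵀ *ᵥ x) = x ⬝ᵥ x := by
    rw [dotProduct_mulVec, vecMul_transpose, mulVec_mulVec, hU, one_mulVec]
  rw [← h]
  simp only [dotProduct, sq]

theorem Matrix.IsHermitian.sInf_spectrum_mul_le (hB : B.IsHermitian) (x : Fin m → ℝ) :
    sInf (spectrum ℝ B) * (x ⬝ᵥ x) ≤ x ⬝ᵥ (B *ᵥ x) := by
  rw [hB.dotProduct_mulVec_eq_sum_eigenvalues, hB.dotProduct_self_eq_sum, Finset.mul_sum]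
  exact Finset.sum_le_sum fun i _ => mul_le_mul_of_nonneg_right
    (csInf_le finite_real_spectrum.bddBelow (hB.eigenvalues_mem_spectrum_real i)) (sq_nonneg _)

theorem Matrix.IsHermitian.dotProduct_mulVec_le_sSup_spectrum_mul (hB : B.IsHermitian)
    (x : Fin m → ℝ) : x ⬝ᵥ (B *ᵥ x) ≤ sSup (spectrum ℝ B) * (x ⬝ᵥ x) := by
  rw [hB.dotProduct_mulVec_eq_sum_eigenvalues, hB.dotProduct_self_eq_sum, Finset.mul_sum]
  exact Finset.sum_le_sum fun i _ => mul_le_mul_of_nonneg_right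
    (le_csSup finite_real_spectrum.bddAbove (hB.eigenvalues_mem_spectrum_real i)) (sq_nonneg _)

theorem Matrix.PosSemidef.sInf_spectrum_nonneg_s18 (hB : B.PosSemidef) : 0 ≤ sInf (spectrum ℝ B) := by
  rw [hB.1.spectrum_real_eq_range_eigenvalues]
  exact Real.sInf_nonneg (by rintro x ⟨i, rfl⟩; exact hB.eigenvalues_nonneg i)

theorem Matrix.PosSemidef.sSup_spectrum_nonneg (hB : B.PosSemidef) : 0 ≤ sSup (spectrum ℝ B) := by
  rw [hB.1.spectrum_real_eq_range_eigenvalues]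
  exact Real.sSup_nonneg (by rintro x ⟨i, rfl⟩; exact hB.eigenvalues_nonneg i)

theorem Matrix.PosSemidef.dotProduct_mulVec_nonneg' (hB : B.PosSemidef) (x : Fin m → ℝ) :
    0 ≤ x ⬝ᵥ (B *ᵥ x) := by
  simpa using hB.dotProduct_mulVec_nonneg x

theorem Matrix.PosSemidef.abs_dotProduct_mulVec_le (hB : B.PosSemidef) (w v : Fin m → ℝ) :
    |w ⬝ᵥ (B *ᵥ v)| ≤ sSup (spectrum ℝ B) * eNorm w * eNorm v := by
  obtain ⟨E, hE⟩ : ∃ E : Matrix (Fin m) (Fin m) ℝ, B = Eᴴ * E := by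
    open scoped MatrixOrder in
    exact CStarAlgebra.nonneg_iff_eq_star_mul_self.mp hB.nonneg
  have hfactor : ∀ a b : Fin m → ℝ, a ⬝ᵥ (B *ᵥ b) = (E *ᵥ a) ⬝ᵥ (E *ᵥ b) := fun a b => by
    rw [hE, conjTranspose_eq_transpose_of_trivial, ← mulVec_mulVec, dotProduct_mulVec,
      vecMul_transpose]
  set L := sSup (spectrum ℝ B)
  have hL : 0 ≤ L := hB.sSup_spectrum_nonneg
  have hEa : ∀ a, eNorm (E *ᵥ a) ≤ Real.sqrt L * eNorm a := fun a => by
    rw [← Real.sqrt_sq (eNorm_nonneg _), ← Real.sqrt_sq (eNorm_nonneg a), ← Real.sqrt_mul hL]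
    refine Real.sqrt_le_sqrt ?_
    rw [eNorm_sq, eNorm_sq, ← hfactor]
    exact hB.1.dotProduct_mulVec_le_sSup_spectrum_mul a
  calc |w ⬝ᵥ (B *ᵥ v)| = |(E *ᵥ w) ⬝ᵥ (E *ᵥ v)| := by rw [hfactor]
    _ ≤ eNorm (E *ᵥ w) * eNorm (E *ᵥ v) := abs_dotProduct_le_eNorm_mul_eNorm _ _
    _ ≤ (Real.sqrt L * eNorm w) * (Real.sqrt L * eNorm v) :=
        mul_le_mul (hEa w) (hEa v) (eNorm_nonneg _)
          (mul_nonneg (Real.sqrt_nonneg L) (eNorm_nonneg w))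
    _ = L * eNorm w * eNorm v := by
        rw [mul_mul_mul_comm, Real.mul_self_sqrt hL, mul_assoc]

theorem Matrix.PosSemidef.eNorm_mulVec_le (hB : B.PosSemidef) (v : Fin m → ℝ) :
    eNorm (B *ᵥ v) ≤ sSup (spectrum ℝ B) * eNorm v := by
  have h : eNorm (B *ᵥ v) ^ 2 ≤ eNorm (B *ᵥ v) * (sSup (spectrum ℝ B) * eNorm v) := by
    rw [eNorm_sq, ← mul_assoc, mul_comm (eNorm _)]
    exact (le_abs_self _).trans (hB.abs_dotProduct_mulVec_le _ _)
  rcases (eNorm_nonneg (B *ᵥ v)).eq_or_lt with h0 | h0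
  · rw [← h0]; exact mul_nonneg hB.sSup_spectrum_nonneg (eNorm_nonneg _)
  · nlinarith

end Spectrum

section Inverse

variable {ι R : Type*} [Fintype ι] [DecidableEq ι] [CommRing R]

theorem Matrix.dotProduct_inv_mulVec_of_transpose_eq {M : Matrix ι ι R} (hM : Mᵀ = M)
    (r z : ι → R) : r ⬝ᵥ (M⁻¹ *ᵥ z) = (M⁻¹ *ᵥ r) ⬝ᵥ z := by
  rw [dotProduct_mulVec, ← mulVec_transpose, transpose_nonsing_inv, hM]

theorem Matrix.inv_mulVec_sub_inv_mulVec {M N : Matrix ι ι R} (hM : IsUnit M.det)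
    (hN : IsUnit N.det) (r : ι → R) :
    M⁻¹ *ᵥ r - N⁻¹ *ᵥ r = M⁻¹ *ᵥ ((N - M) *ᵥ (N⁻¹ *ᵥ r)) := by
  rw [mulVec_mulVec, mulVec_mulVec, Matrix.mul_sub, Matrix.sub_mul, Matrix.mul_assoc,
    mul_nonsing_inv _ hN, nonsing_inv_mul _ hM, Matrix.mul_one, Matrix.one_mul, sub_mulVec]

end Inverse

section ShiftedMatrix

variable {m : ℕ} {B : Matrix (Fin m) (Fin m) ℝ} {μ α : ℝ}

theorem Matrix.IsHermitian.transpose_smul_one_add_smul (hB : B.IsHermitian) :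
    (μ • 1 + α • B)ᵀ = μ • 1 + α • B := by
  rw [transpose_add, transpose_smul, transpose_smul, transpose_one,
    ← conjTranspose_eq_transpose_of_trivial, hB.eq]

theorem Matrix.PosSemidef.coercive_smul_one_add_smul (hB : B.PosSemidef) (hα : 1 ≤ α)
    (x : Fin m → ℝ) :
    (μ + sInf (spectrum ℝ B)) * (x ⬝ᵥ x) ≤ x ⬝ᵥ ((μ • 1 + α • B) *ᵥ x) := by
  have hexpand : x ⬝ᵥ ((μ • 1 + α • B) *ᵥ x) = μ * (x ⬝ᵥ x) + α * (x ⬝ᵥ (B *ᵥ x)) := by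
    rw [add_mulVec, smul_mulVec, smul_mulVec, one_mulVec, dotProduct_add, dotProduct_smul,
      dotProduct_smul, smul_eq_mul, smul_eq_mul]
  have hmin := hB.1.sInf_spectrum_mul_le x
  have hnonneg := hB.dotProduct_mulVec_nonneg' x
  rw [hexpand]
  nlinarith

end ShiftedMatrix

section ProductBound

variable {m : ℕ} {B : Matrix (Fin m) (Fin m) ℝ}

theorem Matrix.PosSemidef.abs_dotProduct_mul_dotProduct_mulVec_sub_le (hB : B.PosSemidef)
    (r u v : Fin m → ℝ) {R : ℝ} (hu : eNorm u ≤ R) (hv : eNorm v ≤ R) :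
    |(r ⬝ᵥ u) * (u ⬝ᵥ (B *ᵥ u)) - (r ⬝ᵥ v) * (v ⬝ᵥ (B *ᵥ v))| ≤
      3 * sSup (spectrum ℝ B) * eNorm r * R ^ 2 * eNorm (u - v) := by
  set L := sSup (spectrum ℝ B)
  set d := eNorm (u - v)
  have hL : 0 ≤ L := hB.sSup_spectrum_nonneg
  have hR : 0 ≤ R := (eNorm_nonneg u).trans hu
  have hd : 0 ≤ d := eNorm_nonneg _
  have hf : |r ⬝ᵥ u| ≤ eNorm r * R :=
    (abs_dotProduct_le_eNorm_mul_eNorm r u).trans (mul_le_mul_of_nonneg_left hu (eNorm_nonneg r))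
  have hfd : |r ⬝ᵥ u - r ⬝ᵥ v| ≤ eNorm r * d := by
    rw [← dotProduct_sub]; exact abs_dotProduct_le_eNorm_mul_eNorm r _
  have hg : |v ⬝ᵥ (B *ᵥ v)| ≤ L * R ^ 2 := by
    calc |v ⬝ᵥ (B *ᵥ v)| ≤ L * eNorm v * eNorm v := hB.abs_dotProduct_mulVec_le v v
      _ ≤ L * R * R := by gcongr; exact eNorm_nonneg v
      _ = L * R ^ 2 := by ring
  have hgd : |u ⬝ᵥ (B *ᵥ u) - v ⬝ᵥ (B *ᵥ v)| ≤ 2 * L * R * d := by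
    have hsplit : u ⬝ᵥ (B *ᵥ u) - v ⬝ᵥ (B *ᵥ v) =
        (u - v) ⬝ᵥ (B *ᵥ u) + v ⬝ᵥ (B *ᵥ (u - v)) := by
      simp only [sub_dotProduct, mulVec_sub, dotProduct_sub]; ring
    calc |u ⬝ᵥ (B *ᵥ u) - v ⬝ᵥ (B *ᵥ v)|
        ≤ |(u - v) ⬝ᵥ (B *ᵥ u)| + |v ⬝ᵥ (B *ᵥ (u - v))| := hsplit ▸ abs_add_le _ _
      _ ≤ L * d * eNorm u + L * eNorm v * d :=
          add_le_add (hB.abs_dotProduct_mulVec_le _ _) (hB.abs_dotProduct_mulVec_le _ _)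
      _ ≤ L * d * R + L * R * d := by gcongr
      _ = 2 * L * R * d := by ring
  calc |(r ⬝ᵥ u) * (u ⬝ᵥ (B *ᵥ u)) - (r ⬝ᵥ v) * (v ⬝ᵥ (B *ᵥ v))|
      = |(r ⬝ᵥ u) * (u ⬝ᵥ (B *ᵥ u) - v ⬝ᵥ (B *ᵥ v)) + (v ⬝ᵥ (B *ᵥ v)) * (r ⬝ᵥ u - r ⬝ᵥ v)| := by
        congr 1; ring
    _ ≤ |r ⬝ᵥ u| * |u ⬝ᵥ (B *ᵥ u) - v ⬝ᵥ (B *ᵥ v)| + |v ⬝ᵥ (B *ᵥ v)| * |r ⬝ᵥ u - r ⬝ᵥ v| := by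
        rw [← abs_mul, ← abs_mul]; exact abs_add_le _ _
    _ ≤ (eNorm r * R) * (2 * L * R * d) + (L * R ^ 2) * (eNorm r * d) := by
        have := eNorm_nonneg r
        gcongr
    _ = 3 * L * eNorm r * R ^ 2 * d := by ring

end ProductBound

section Correction

variable {m : ℕ}

noncomputable def shiftedInvMulVec (μ : ℝ) (B : Matrix (Fin m) (Fin m) ℝ) (r : Fin m → ℝ)
    (α : ℝ) : Fin m → ℝ :=
  (μ • 1 + α • B)⁻¹ *ᵥ r

noncomputable def correctionNumerator (μ : ℝ) (B : Matrix (Fin m) (Fin m) ℝ) (r : Fin m → ℝ)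
    (α : ℝ) : ℝ :=
  (r ⬝ᵥ ((μ • 1 + α • B)⁻¹ *ᵥ r)) * (r ⬝ᵥ ((μ • 1 + α • B)⁻¹ *ᵥ (B *ᵥ ((μ • 1 + α • B)⁻¹ *ᵥ r))))

variable {B : Matrix (Fin m) (Fin m) ℝ} {μ α β : ℝ}

theorem correctionNumerator_eq (hB : B.IsHermitian) (r : Fin m → ℝ) :
    correctionNumerator μ B r α = (r ⬝ᵥ shiftedInvMulVec μ B r α) *
      (shiftedInvMulVec μ B r α ⬝ᵥ (B *ᵥ shiftedInvMulVec μ B r α)) := by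
  rw [correctionNumerator]
  congr 1
  exact dotProduct_inv_mulVec_of_transpose_eq hB.transpose_smul_one_add_smul _ _

theorem isUnit_det_smul_one_add_smul (hB : B.PosSemidef) (hμ : 0 < μ) (hα : 1 ≤ α) :
    IsUnit (μ • 1 + α • B).det :=
  isUnit_det_of_coercive (by linarith [hB.sInf_spectrum_nonneg_s18])
    (hB.coercive_smul_one_add_smul hα)

theorem eNorm_shiftedInvMulVec_le (hB : B.PosSemidef) (hμ : 0 < μ) (hα : 1 ≤ α)
    (r : Fin m → ℝ) :
    eNorm (shiftedInvMulVec μ B r α) ≤ eNorm r / (μ + sInf (spectrum ℝ B)) :=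
  eNorm_inv_mulVec_le_of_coercive (by linarith [hB.sInf_spectrum_nonneg_s18])
    (hB.coercive_smul_one_add_smul hα) r

theorem shiftedInvMulVec_sub (hB : B.PosSemidef) (hμ : 0 < μ) (hα : 1 ≤ α) (hβ : 1 ≤ β)
    (r : Fin m → ℝ) :
    shiftedInvMulVec μ B r α - shiftedInvMulVec μ B r β =
      (β - α) • ((μ • 1 + α • B)⁻¹ *ᵥ (B *ᵥ shiftedInvMulVec μ B r β)) := by
  have hdiff : (μ • 1 + β • B) - (μ • 1 + α • B) = (β - α) • B := by
    rw [add_sub_add_left_eq_sub, sub_smul]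
  rw [shiftedInvMulVec, shiftedInvMulVec, inv_mulVec_sub_inv_mulVec
    (isUnit_det_smul_one_add_smul hB hμ hα) (isUnit_det_smul_one_add_smul hB hμ hβ), hdiff,
    smul_mulVec, mulVec_smul]

theorem eNorm_shiftedInvMulVec_sub_le (hB : B.PosSemidef) (hμ : 0 < μ) (hα : 1 ≤ α)
    (hβ : 1 ≤ β) (r : Fin m → ℝ) :
    eNorm (shiftedInvMulVec μ B r α - shiftedInvMulVec μ B r β) ≤
      |α - β| * (sSup (spectrum ℝ B) * (eNorm r / (μ + sInf (spectrum ℝ B))) /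
        (μ + sInf (spectrum ℝ B))) := by
  have hc : 0 < μ + sInf (spectrum ℝ B) := by linarith [hB.sInf_spectrum_nonneg_s18]
  rw [shiftedInvMulVec_sub hB hμ hα hβ, eNorm_smul, abs_sub_comm]
  gcongr
  calc eNorm ((μ • 1 + α • B)⁻¹ *ᵥ (B *ᵥ shiftedInvMulVec μ B r β))
      ≤ eNorm (B *ᵥ shiftedInvMulVec μ B r β) / (μ + sInf (spectrum ℝ B)) :=
        eNorm_inv_mulVec_le_of_coercive hc (hB.coercive_smul_one_add_smul hα) _
    _ ≤ sSup (spectrum ℝ B) * (eNorm r / (μ + sInf (spectrum ℝ B))) /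
        (μ + sInf (spectrum ℝ B)) := by
        gcongr
        exact (hB.eNorm_mulVec_le _).trans (mul_le_mul_of_nonneg_left
          (eNorm_shiftedInvMulVec_le hB hμ hβ r) hB.sSup_spectrum_nonneg)

theorem correctionNumerator_nonneg (hB : B.PosSemidef) (hμ : 0 < μ) (hα : 1 ≤ α)
    (r : Fin m → ℝ) : 0 ≤ correctionNumerator μ B r α := by
  rw [correctionNumerator_eq hB.1]
  refine mul_nonneg ?_ (hB.dotProduct_mulVec_nonneg' _)
  have hu : (μ • 1 + α • B) *ᵥ shiftedInvMulVec μ B r α = r := by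
    rw [shiftedInvMulVec, mulVec_mulVec,
      mul_nonsing_inv _ (isUnit_det_smul_one_add_smul hB hμ hα), one_mulVec]
  set u := shiftedInvMulVec μ B r α
  have huu : 0 ≤ u ⬝ᵥ u := by rw [← eNorm_sq]; positivity
  calc 0 ≤ (μ + sInf (spectrum ℝ B)) * (u ⬝ᵥ u) :=
        mul_nonneg (by linarith [hB.sInf_spectrum_nonneg_s18]) huu
    _ ≤ u ⬝ᵥ ((μ • 1 + α • B) *ᵥ u) := hB.coercive_smul_one_add_smul hα u
    _ = r ⬝ᵥ u := by rw [hu, dotProduct_comm]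

theorem abs_correctionNumerator_sub_le (hB : B.PosSemidef) (hμ : 0 < μ) (hα : 1 ≤ α)
    (hβ : 1 ≤ β) (r : Fin m → ℝ) :
    |correctionNumerator μ B r α - correctionNumerator μ B r β| ≤
      3 * sSup (spectrum ℝ B) ^ 2 * eNorm r ^ 4 / (μ + sInf (spectrum ℝ B)) ^ 4 * |α - β| := by
  have hc : 0 < μ + sInf (spectrum ℝ B) := by linarith [hB.sInf_spectrum_nonneg_s18]
  rw [correctionNumerator_eq hB.1, correctionNumerator_eq hB.1]
  refine (hB.abs_dotProduct_mul_dotProduct_mulVec_sub_le r _ _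
    (eNorm_shiftedInvMulVec_le hB hμ hα r) (eNorm_shiftedInvMulVec_le hB hμ hβ r)).trans ?_
  have hL := hB.sSup_spectrum_nonneg
  have hN := eNorm_nonneg r
  calc _ ≤ 3 * sSup (spectrum ℝ B) * eNorm r * (eNorm r / (μ + sInf (spectrum ℝ B))) ^ 2 *
        (|α - β| * (sSup (spectrum ℝ B) * (eNorm r / (μ + sInf (spectrum ℝ B))) /
          (μ + sInf (spectrum ℝ B)))) := by
        gcongr; exact eNorm_shiftedInvMulVec_sub_le hB hμ hα hβ r
    _ = _ := by field_simp

end Correction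

theorem LipschitzOnWith.exists_unique_fixedPoint_of_mapsTo {X : Type*} [MetricSpace X]
    {f : X → X} {s : Set X} {K : ℝ≥0} (hf : LipschitzOnWith K f s) (hK : K < 1)
    (hsc : IsComplete s) (hs : s.Nonempty) (hsf : Set.MapsTo f s s) :
    ∃ x ∈ s, f x = x ∧ (∀ y ∈ s, f y = y → y = x) ∧
      ∀ a : ℕ → X, a 0 ∈ s → (∀ p, a (p + 1) = f (a p)) → Tendsto a atTop (𝓝 x) := by
  have hcontr : ContractingWith K (hsf.restrict f s s) := ⟨hK, hf.mapsToRestrict hsf⟩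
  have hunique : ∀ y ∈ s, ∀ z ∈ s, f y = y → f z = z → y = z := fun y hy z hz hfy hfz =>
    congrArg Subtype.val <| hcontr.fixedPoint_unique' (x := ⟨y, hy⟩) (y := ⟨z, hz⟩)
      (Subtype.ext hfy) (Subtype.ext hfz)
  obtain ⟨x₀, hx₀⟩ := hs
  obtain ⟨x, hx, hfx, -⟩ := hcontr.exists_fixedPoint' hsc hsf hx₀ (edist_ne_top _ _)
  refine ⟨x, hx, hfx, fun y hy hfy => hunique y hy x hx hfy hfx, fun a ha0 ha => ?_⟩
  obtain ⟨y, hy, hfy, hlim, -⟩ := hcontr.exists_fixedPoint' hsc hsf ha0 (edist_ne_top _ _)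
  have ha_iter : a = fun p => f^[p] (a 0) := funext fun p => by
    induction p with
    | zero => rfl
    | succ p ih => rw [ha, ih, Function.iterate_succ_apply']
  rw [ha_iter, ← hunique y hy x hx hfy hfx]
  exact hlim

/-- **Proposition 4: unique fixed point of the correction-factor map.** With
`B = ACAᵀ`, `M(α) = μI + αB`, regularization
`δ = (3/(4q))·λ_max(B)²‖r̄‖₂⁴/(μ + λ_min(B))⁴ + ε_δ·k` and
`ζ_δ(α) = 1 + (r̄ᵀM(α)⁻¹r̄)(r̄ᵀM(α)⁻¹BM(α)⁻¹r̄)/(4δ)`, the map `ζ_δ` sends `[1,∞)` to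
itself, is a contraction there with constant at most `q < 1`, has a unique fixed point
`α* ∈ [1,∞)`, and the fixed-point iterates from any starting point in `[1,∞)` converge
to `α*`. -/
theorem zeta_contraction_unique_fixed_point {m n : ℕ} (μ : ℝ) (hμ : 0 < μ)
    (A : Matrix (Fin m) (Fin n) ℝ) (C : Matrix (Fin n) (Fin n) ℝ) (hC : C.PosSemidef)
    (rbar : Fin m → ℝ) (q : ℝ) (hq0 : 0 < q) (hq1 : q < 1)
    (εδ : ℝ) (hεδ : 0 < εδ) (k : ℕ) (hk : 1 ≤ k) :
    let B : Matrix (Fin m) (Fin m) ℝ := A * C * Aᵀ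
    let M : ℝ → Matrix (Fin m) (Fin m) ℝ := fun α => μ • 1 + α • B
    let lmax : ℝ := sSup (spectrum ℝ B)
    let lmin : ℝ := sInf (spectrum ℝ B)
    let δ : ℝ := (3 / (4 * q)) * lmax ^ 2 * eNorm rbar ^ 4 / (μ + lmin) ^ 4 + εδ * k
    let ζ : ℝ → ℝ := fun α => 1 + (rbar ⬝ᵥ ((M α)⁻¹ *ᵥ rbar)) *
      (rbar ⬝ᵥ ((M α)⁻¹ *ᵥ (B *ᵥ ((M α)⁻¹ *ᵥ rbar)))) / (4 * δ)
    (∀ α, 1 ≤ α → 1 ≤ ζ α) ∧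
    (∀ α β, 1 ≤ α → 1 ≤ β → |ζ α - ζ β| ≤ q * |α - β|) ∧
    ∃ αstar : ℝ, (1 ≤ αstar ∧ ζ αstar = αstar) ∧
      (∀ β, 1 ≤ β → ζ β = β → β = αstar) ∧
      ∀ a : ℕ → ℝ, 1 ≤ a 0 → (∀ p, a (p + 1) = ζ (a p)) →
        Tendsto a atTop (nhds αstar) := by
  intro B M lmax lmin δ ζ
  have hB : B.PosSemidef := by
    simpa only [conjTranspose_eq_transpose_of_trivial] using hC.mul_mul_conjTranspose_same A
  have hζ : ∀ α, ζ α = 1 + correctionNumerator μ B rbar α / (4 * δ) := fun _ => rfl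
  set κ := 3 * lmax ^ 2 * eNorm rbar ^ 4 / (μ + lmin) ^ 4
  have hκ : 0 ≤ κ := by positivity
  have hqεk : 0 < q * (εδ * k) := mul_pos hq0 (mul_pos hεδ (by exact_mod_cast hk))
  have hδ_eq : q * (4 * δ) = κ + 4 * (q * (εδ * k)) := by
    simp only [δ, κ]; field_simp
  have hκ_le : κ ≤ q * (4 * δ) := by linarith
  have hδ : 0 < 4 * δ := pos_of_mul_pos_right (by linarith : 0 < q * (4 * δ)) hq0.le
  have hmaps : ∀ α, 1 ≤ α → 1 ≤ ζ α := fun α hα => by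
    rw [hζ]
    have := div_nonneg (correctionNumerator_nonneg hB hμ hα rbar) hδ.le
    linarith
  have hlip : ∀ α β, 1 ≤ α → 1 ≤ β → |ζ α - ζ β| ≤ q * |α - β| := fun α β hα hβ => by
    rw [hζ, hζ, add_sub_add_left_eq_sub, ← sub_div, abs_div, abs_of_pos hδ, div_le_iff₀ hδ]
    calc _ ≤ κ * |α - β| := abs_correctionNumerator_sub_le hB hμ hα hβ rbar
      _ ≤ q * (4 * δ) * |α - β| := by gcongr
      _ = q * |α - β| * (4 * δ) := by ring
  have hcontr : LipschitzOnWith ⟨q, hq0.le⟩ ζ (Set.Ici 1) :=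
    LipschitzOnWith.of_dist_le_mul fun α hα β hβ => hlip α β hα hβ
  obtain ⟨αstar, hαstar, hfix, hunique, hconv⟩ := hcontr.exists_unique_fixedPoint_of_mapsTo
    hq1 isClosed_Ici.isComplete Set.nonempty_Ici hmaps
  exact ⟨hmaps, hlip, αstar, ⟨hαstar, hfix⟩, hunique, hconv⟩
end

section
/- In the setting of the non-asymptotic EnKF error estimator (Theorem 1), with its absolute constants c₁, c₂ > 0 and its error terms E₁, E₂, E₃, E₄, E₅, let p ∈ (0,1), set c_m = max{1/c₂, c₁}, and let ε > 0. If N ≥ c_m·log(11/(1 − p))·max{ 4‖C‖∞²/t(ε)², 16n‖C^{1/2}‖∞²/t(ε)², 16m‖Σ^{1/2}‖∞²/t(ε)², 4n‖C^{1/2}‖∞²/ε², ‖C‖∞²/ε² }, where t(ε) = −‖C‖∞ + √(‖C‖∞² + 4ε), then E₃(ε,C) ≤ (1 − p)/11, E₄(ε,C) ≤ (1 − p)/11, E₅(ε,C,Σ) ≤ (1 − p)/11, E₁(ε,C) ≤ (1 − p)/11, and E₂(ε,C) ≤ (1 − p)/11, and consequently 1 − 6E₃(ε,C) − E₄(ε,C)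 − E₅(ε,C,Σ) − E₁(ε,C) − 2E₂(ε,C) ≥ p. -/
/-!
Each error term has the form `exp (-(N * a / (c * k)))` with `c ∈ {c₁, 1/c₂}`, so `c ≤ c_m`, and
`k / a` is one of the entries of the maximum in (26). Hence (26) makes the exponent at most
`-log (11 / (1 - p))`, i.e. the term at most `(1 - p) / 11`; the final bound subtracts eleven such
terms from `1`.
-/

open Matrix

/-- The induced `ℓ∞` operator norm of a matrix (maximum absolute row sum). -/
noncomputable def matNormInf {k l : ℕ} (M : Matrix (Fin k) (Fin l) ℝ) : ℝ :=
  ⨆ i, ∑ j, |M i j|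

open scoped ComplexOrder in
/-- The positive semidefinite square root of a positive semidefinite matrix
(removed from Mathlib; restated with its former definition). -/
noncomputable def Matrix.PosSemidef.sqrt {n : Type*} [Fintype n] [DecidableEq n]
    {𝕜 : Type*} [RCLike 𝕜] {A : Matrix n n 𝕜} (hA : A.PosSemidef) : Matrix n n 𝕜 :=
  hA.1.eigenvectorUnitary.1 * diagonal ((↑) ∘ (√·) ∘ hA.1.eigenvalues) *
  (star hA.1.eigenvectorUnitary : Matrix n n 𝕜)

theorem Matrix.PosDef.ne_zero {ι R : Type*} [Ring R] [PartialOrder R] [StarRing R] [Nontrivial R]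
    [Nonempty ι] {A : Matrix ι ι R} (hA : A.PosDef) : A ≠ 0 := by
  intro h0
  simpa [h0] using hA.diag_pos (i := Classical.arbitrary ι)

section Sqrt

open scoped ComplexOrder

variable {ι 𝕜 : Type*} [Fintype ι] [DecidableEq ι] [RCLike 𝕜] {A : Matrix ι ι 𝕜}

theorem Matrix.PosSemidef.sqrt_mul_self (hA : A.PosSemidef) : hA.sqrt * hA.sqrt = A := by
  set U : Matrix ι ι 𝕜 := hA.1.eigenvectorUnitary.1
  set D : Matrix ι ι 𝕜 := diagonal ((↑) ∘ (√·) ∘ hA.1.eigenvalues)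
  have hU : star U * U = 1 := Matrix.mem_unitaryGroup_iff'.1 hA.1.eigenvectorUnitary.2
  have hD : D * D = diagonal ((↑) ∘ hA.1.eigenvalues) := by
    simp only [D, diagonal_mul_diagonal]
    congr 1
    funext i
    simp [← RCLike.ofReal_mul, Real.mul_self_sqrt (hA.eigenvalues_nonneg i)]
  conv_rhs => rw [hA.1.spectral_theorem, Unitary.conjStarAlgAut_apply]
  calc hA.sqrt * hA.sqrt = U * D * (star U * U) * D * star U := by
        simp only [Matrix.PosSemidef.sqrt, U, D, Matrix.mul_assoc]
    _ = _ := by rw [hU, Matrix.mul_one, Matrix.mul_assoc U, hD]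

theorem Matrix.PosSemidef.sqrt_ne_zero (hA : A.PosSemidef) (h : A ≠ 0) : hA.sqrt ≠ 0 := by
  intro h0
  exact h (by rw [← hA.sqrt_mul_self, h0, zero_mul])

end Sqrt

theorem matNormInf_pos {k l : ℕ} {M : Matrix (Fin k) (Fin l) ℝ} (h : M ≠ 0) :
    0 < matNormInf M := by
  obtain ⟨i, j, hij⟩ : ∃ i j, M i j ≠ 0 := by
    by_contra! h'
    exact h (Matrix.ext h')
  calc (0 : ℝ) < ∑ j, |M i j| :=
        Finset.sum_pos' (fun _ _ => abs_nonneg _) ⟨j, Finset.mem_univ j, abs_pos.2 hij⟩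
    _ ≤ matNormInf M := le_ciSup (f := fun i => ∑ j, |M i j|) (Set.finite_range _).bddAbove i

theorem Real.exp_neg_div_le_of_mul_log_inv_le {δ c c' k a K N : ℝ} (hδ : 0 < δ) (hδ₁ : δ ≤ 1)
    (hc : 0 < c) (hk : 0 < k) (ha : 0 < a) (hcc' : c ≤ c') (hK : k / a ≤ K)
    (hN : c' * log δ⁻¹ * K ≤ N) : exp (-(N * a / (c * k))) ≤ δ := by
  have hL : 0 ≤ log δ⁻¹ := log_nonneg (one_le_inv_iff₀.2 ⟨hδ, hδ₁⟩)
  have hN' : c * log δ⁻¹ * (k / a) ≤ N :=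
    le_trans (by gcongr; exact mul_nonneg (hc.le.trans hcc') hL) hN
  have hlog : log δ⁻¹ ≤ N * a / (c * k) := by
    rw [mul_div_assoc', div_le_iff₀ ha] at hN'
    rw [le_div_iff₀ (by positivity)]
    linarith
  calc exp (-(N * a / (c * k))) ≤ exp (-log δ⁻¹) := exp_le_exp.2 (by linarith)
    _ = δ := by rw [log_inv, neg_neg, exp_log hδ]

theorem enkf_sample_size_sufficiency_general {n m : ℕ} (hn : 1 ≤ n) (hm : 1 ≤ m)
    (C : Matrix (Fin n) (Fin n) ℝ) (Sig : Matrix (Fin m) (Fin m) ℝ)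
    (hC : C.PosDef) (hSig : Sig.PosDef)
    (c₁ c₂ : ℝ) (hc₁ : 0 < c₁) (hc₂ : 0 < c₂)
    (p : ℝ) (hp0 : 0 < p) (hp1 : p < 1)
    (ε : ℝ) (hε : 0 < ε) (N : ℕ) :
    let cm : ℝ := max (1 / c₂) c₁
    let nC : ℝ := matNormInf C
    let nChalf : ℝ := matNormInf hC.posSemidef.sqrt
    let nShalf : ℝ := matNormInf hSig.posSemidef.sqrt
    let t : ℝ := -nC + Real.sqrt (nC ^ 2 + 4 * ε)
    let s : ℝ := t / 2
    let E₁ : ℝ := Real.exp (-(1 / (4 * c₁ * n)) * (ε * Real.sqrt N / nChalf) ^ 2)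
    let E₂ : ℝ := Real.exp (-c₂ * N * ε ^ 2 / nC ^ 2)
    let E₃ : ℝ := Real.exp (-c₂ * N * s ^ 2 / nC ^ 2)
    let E₄ : ℝ := Real.exp (-(N * s ^ 2) / (4 * c₁ * n * nChalf ^ 2))
    let E₅ : ℝ := Real.exp (-(N * s ^ 2) / (4 * c₁ * m * nShalf ^ 2))
    (N : ℝ) ≥ cm * Real.log (11 / (1 - p)) *
        max (4 * nC ^ 2 / t ^ 2)
          (max (16 * n * nChalf ^ 2 / t ^ 2)
            (max (16 * m * nShalf ^ 2 / t ^ 2)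
              (max (4 * n * nChalf ^ 2 / ε ^ 2) (nC ^ 2 / ε ^ 2)))) →
    E₃ ≤ (1 - p) / 11 ∧ E₄ ≤ (1 - p) / 11 ∧ E₅ ≤ (1 - p) / 11 ∧
      E₁ ≤ (1 - p) / 11 ∧ E₂ ≤ (1 - p) / 11 ∧
      1 - 6 * E₃ - E₄ - E₅ - E₁ - 2 * E₂ ≥ p := by
  intro cm nC nChalf nShalf t s E₁ E₂ E₃ E₄ E₅ hN
  have : Nonempty (Fin n) := ⟨⟨0, hn⟩⟩
  have : Nonempty (Fin m) := ⟨⟨0, hm⟩⟩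
  have hnC : 0 < nC := matNormInf_pos hC.ne_zero
  have hnCh : 0 < nChalf := matNormInf_pos (hC.posSemidef.sqrt_ne_zero hC.ne_zero)
  have hnSh : 0 < nShalf := matNormInf_pos (hSig.posSemidef.sqrt_ne_zero hSig.ne_zero)
  have ht : 0 < t := by
    have : nC < √(nC ^ 2 + 4 * ε) := (Real.lt_sqrt hnC.le).2 (by linarith)
    simp only [t]; linarith
  obtain ⟨hδ, hδ₁⟩ : 0 < (1 - p) / 11 ∧ (1 - p) / 11 ≤ 1 := ⟨by linarith, by linarith⟩
  rw [← inv_div] at hN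
  have h₃ : E₃ ≤ (1 - p) / 11 := by
    convert Real.exp_neg_div_le_of_mul_log_inv_le hδ hδ₁ (one_div_pos.2 hc₂) (by positivity)
      (by positivity) (le_max_left _ _) (le_max_left _ _) hN using 2
    simp only [s]; field_simp; ring
  have h₄ : E₄ ≤ (1 - p) / 11 := by
    convert Real.exp_neg_div_le_of_mul_log_inv_le hδ hδ₁ hc₁ (by positivity) (by positivity)
      (le_max_right _ _) (le_max_of_le_right (le_max_left _ _)) hN using 2
    simp only [s]; field_simp; ring
  have h₅ : E₅ ≤ (1 - p) / 11 := by
    convert Real.exp_neg_div_le_of_mul_log_inv_le hδ hδ₁ hc₁ (by positivity) (by positivity)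
      (le_max_right _ _) (le_max_of_le_right (le_max_of_le_right (le_max_left _ _))) hN using 2
    simp only [s]; field_simp; ring
  have h₁ : E₁ ≤ (1 - p) / 11 := by
    convert Real.exp_neg_div_le_of_mul_log_inv_le hδ hδ₁ hc₁ (by positivity) (by positivity)
      (le_max_right _ _)
      (le_max_of_le_right (le_max_of_le_right (le_max_of_le_right (le_max_left _ _)))) hN using 2
    rw [div_pow, mul_pow, Real.sq_sqrt N.cast_nonneg]; field_simp
  have h₂ : E₂ ≤ (1 - p) / 11 := by
    convert Real.exp_neg_div_le_of_mul_log_inv_le hδ hδ₁ (one_div_pos.2 hc₂) (by positivity)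
      (by positivity) (le_max_left _ _)
      (le_max_of_le_right (le_max_of_le_right (le_max_of_le_right (le_max_right _ _)))) hN using 2
    field_simp
  exact ⟨h₃, h₄, h₅, h₁, h₂, by linarith⟩

/-- **Remark 5, sample-size sufficiency.** For any positive constants `c₁, c₂`,
if the ensemble size `N` satisfies the bound (26), then each error term `E₁,…,E₅` is at most
`(1 − p)/11`, and consequently the probability bound of Theorem 1 is at least `p`. -/
theorem enkf_sample_size_sufficiency {n m : ℕ} (hn : 1 ≤ n) (hm : 1 ≤ m)
    (C : Matrix (Fin n) (Fin n) ℝ) (Sig : Matrix (Fin m) (Fin m) ℝ)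
    (hC : C.PosDef) (hSig : Sig.PosDef)
    (c₁ c₂ : ℝ) (hc₁ : 0 < c₁) (hc₂ : 0 < c₂)
    (p : ℝ) (hp0 : 0 < p) (hp1 : p < 1)
    (ε : ℝ) (hε : 0 < ε) (N : ℕ) (hN : 1 ≤ N) :
    let cm : ℝ := max (1 / c₂) c₁
    let nC : ℝ := matNormInf C
    let nChalf : ℝ := matNormInf hC.posSemidef.sqrt
    let nShalf : ℝ := matNormInf hSig.posSemidef.sqrt
    let t : ℝ := -nC + Real.sqrt (nC ^ 2 + 4 * ε)
    let s : ℝ := t / 2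
    let E₁ : ℝ := Real.exp (-(1 / (4 * c₁ * n)) * (ε * Real.sqrt N / nChalf) ^ 2)
    let E₂ : ℝ := Real.exp (-c₂ * N * ε ^ 2 / nC ^ 2)
    let E₃ : ℝ := Real.exp (-c₂ * N * s ^ 2 / nC ^ 2)
    let E₄ : ℝ := Real.exp (-(N * s ^ 2) / (4 * c₁ * n * nChalf ^ 2))
    let E₅ : ℝ := Real.exp (-(N * s ^ 2) / (4 * c₁ * m * nShalf ^ 2))
    (N : ℝ) ≥ cm * Real.log (11 / (1 - p)) *
        max (4 * nC ^ 2 / t ^ 2)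
          (max (16 * n * nChalf ^ 2 / t ^ 2)
            (max (16 * m * nShalf ^ 2 / t ^ 2)
              (max (4 * n * nChalf ^ 2 / ε ^ 2) (nC ^ 2 / ε ^ 2)))) →
    E₃ ≤ (1 - p) / 11 ∧ E₄ ≤ (1 - p) / 11 ∧ E₅ ≤ (1 - p) / 11 ∧
      E₁ ≤ (1 - p) / 11 ∧ E₂ ≤ (1 - p) / 11 ∧
      1 - 6 * E₃ - E₄ - E₅ - E₁ - 2 * E₂ ≥ p :=
  enkf_sample_size_sufficiency_general hn hm C Sig hC hSig c₁ c₂ hc₁ hc₂ p hp0 hp1 ε hε N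
end
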